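/- arXiv:2211.04836 — 7 statements merged into one kernel-verified Lean document; each statement's English description precedes it below -/
import Mathlib

section
/- Let G be a connected graph with n vertices and let v be a vertex of degree at least 3. Suppose P = u v_1 v_2 ⋯ v_{x-1} v is a pendant path attached at v (so deg(u)=1, the internal vertices v_1,...,v_{x-1} have degree 2 in G, and the path has x edges) with x < n/2. Then Tr_G(v_{x-1}) - Tr_G(v) = n - 2x. -/
/-!
Walking from a vertex `w` off the path towards the leaf `u`, a shortest walk must enter the path
at `v` and then run along it, since every internal vertex has only its two path neighbours. Hence
`d(v_{x-1}, w) = d(v, w) + 1` for the `n - x` vertices `w` outside `u, v₁, …, v_{x-1}`, while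
`d(v_{x-1}, w) = d(v, w) - 1` for the `x` vertices on that part of the path.
-/

/-- The transmission of a vertex: sum of distances to all other vertices. -/
noncomputable def transmission {V : Type*} [Fintype V] (G : SimpleGraph V) (v : V) : ℕ :=
  ∑ u : V, G.dist v u

namespace SimpleGraph

variable {V : Type*} {G : SimpleGraph V}

theorem Connected.exists_adj_dist_eq_add_one (hconn : G.Connected) {a w : V} (h : a ≠ w) :
    ∃ z, G.Adj a z ∧ G.dist a w = G.dist z w + 1 := by
  obtain ⟨q, hq⟩ := hconn.exists_walk_length_eq_dist a w
  cases q with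
  | nil => exact absurd rfl h
  | @cons _ z _ hz q =>
    refine ⟨z, hz, le_antisymm ?_ ?_⟩
    · calc G.dist a w ≤ G.dist a z + G.dist z w := hconn.dist_triangle
        _ = G.dist z w + 1 := by rw [dist_eq_one_iff_adj.mpr hz, add_comm]
    · rw [← hq, Walk.length_cons]
      exact Nat.add_le_add_right (dist_le q) 1

theorem Connected.dist_eq_dist_add_one_of_forall_le (hconn : G.Connected) {a b w : V} (h : a ≠ w)
    (hfar : ∀ z, G.Adj a z → z ≠ b → G.dist a w ≤ G.dist z w) :
    G.dist a w = G.dist b w + 1 := by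
  obtain ⟨z, hz, hdist⟩ := hconn.exists_adj_dist_eq_add_one h
  by_cases hzb : z = b
  · rwa [← hzb]
  · have := hfar z hz hzb
    omega

theorem eq_or_eq_of_degree_eq_two {a b c z : V} [Fintype (G.neighborSet a)]
    (hdeg : G.degree a = 2) (hb : G.Adj a b) (hc : G.Adj a c) (hbc : b ≠ c) (hz : G.Adj a z) :
    z = b ∨ z = c := by
  classical
  have hsub : ({b, c} : Finset V) ⊆ G.neighborFinset a := by
    simp [Finset.insert_subset_iff, hb, hc]
  have heq : ({b, c} : Finset V) = G.neighborFinset a :=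
    Finset.eq_of_subset_of_card_le hsub (by rw [card_neighborFinset_eq_degree, hdeg,
      Finset.card_pair hbc])
  simpa [← heq] using (mem_neighborFinset G a z).mpr hz

structure IsPendantPath [G.LocallyFinite] (p : ℕ → V) (x : ℕ) : Prop where
  injOn : ∀ i ≤ x, ∀ j ≤ x, p i = p j → i = j
  adj : ∀ i < x, G.Adj (p i) (p (i + 1))
  degree_start : G.degree (p 0) = 1
  degree_internal : ∀ i, 1 ≤ i → i ≤ x - 1 → G.degree (p i) = 2

namespace IsPendantPath

variable [G.LocallyFinite] {p : ℕ → V} {x : ℕ}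

theorem eq_pred_of_adj (hP : G.IsPendantPath p x) {i : ℕ} (hi : i < x) {z : V}
    (hz : G.Adj (p i) z) (hne : z ≠ p (i + 1)) : 0 < i ∧ z = p (i - 1) := by
  rcases Nat.eq_zero_or_pos i with rfl | hpos
  · exact absurd ((degree_eq_one_iff_existsUnique_adj.mp hP.degree_start).unique hz
      (hP.adj 0 hi)) hne
  · have hpred : G.Adj (p i) (p (i - 1)) := by
      simpa [Nat.sub_add_cancel hpos] using (hP.adj (i - 1) (by omega)).symm
    have hdistinct : p (i - 1) ≠ p (i + 1) := fun h ↦ by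
      have := hP.injOn (i - 1) (by omega) (i + 1) (by omega) h
      omega
    refine ⟨hpos, ?_⟩
    have := eq_or_eq_of_degree_eq_two (hP.degree_internal i hpos (by omega)) hpred
      (hP.adj i hi) hdistinct hz
    tauto

theorem dist_eq_dist_succ_add_one (hP : G.IsPendantPath p x) (hconn : G.Connected) {i : ℕ}
    (hi : i < x) {w : V} (hw : ∀ j ≤ i, w ≠ p j) :
    G.dist (p i) w = G.dist (p (i + 1)) w + 1 := by
  induction i with
  | zero =>
    exact hconn.dist_eq_dist_add_one_of_forall_le (hw 0 le_rfl).symm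
      fun z hz hne ↦ absurd (hP.eq_pred_of_adj hi hz hne).1 (lt_irrefl 0)
  | succ i ih =>
    refine hconn.dist_eq_dist_add_one_of_forall_le (hw (i + 1) le_rfl).symm
      fun z hz hne ↦ ?_
    rw [(hP.eq_pred_of_adj hi hz hne).2, Nat.add_sub_cancel,
      ih (by omega) fun j hj ↦ hw j (by omega)]
    exact Nat.le_succ _

theorem dist_eq_sub (hP : G.IsPendantPath p x) (hconn : G.Connected) {i k : ℕ} (hik : i ≤ k)
    (hk : k ≤ x) : G.dist (p i) (p k) = k - i := by
  obtain ⟨d, rfl⟩ := Nat.exists_eq_add_of_le hik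
  induction d generalizing i with
  | zero => simp
  | succ d ih =>
    have hoff : ∀ j ≤ i, p (i + (d + 1)) ≠ p j := fun j hj h ↦ by
      have := hP.injOn _ hk j (by omega) h
      omega
    rw [hP.dist_eq_dist_succ_add_one hconn (by omega) hoff, show i + (d + 1) = i + 1 + d by ring,
      ih (by omega) (by omega)]
    omega

end IsPendantPath

end SimpleGraph

theorem sum_eq_card_sub_two_mul_card {V : Type*} [Fintype V] [DecidableEq V] (S : Finset V)
    (f : V → ℤ) (hS : ∀ u ∈ S, f u = -1) (hSc : ∀ u ∉ S, f u = 1) :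
    ∑ u, f u = Fintype.card V - 2 * S.card := by
  rw [← Finset.sum_add_sum_compl S, Finset.sum_congr rfl hS,
    Finset.sum_congr rfl fun u hu ↦ hSc u (Finset.mem_compl.mp hu), Finset.sum_const,
    Finset.sum_const, Finset.card_compl, smul_neg, nsmul_eq_mul, nsmul_eq_mul,
    Nat.cast_sub S.card_le_univ]
  ring

open SimpleGraph in
theorem stmt_3_general {V : Type*} [Fintype V] (G : SimpleGraph V) [DecidableRel G.Adj]
    (hconn : G.Connected) (n x : ℕ) (hn : Fintype.card V = n) (hx1 : 1 ≤ x)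
    (p : ℕ → V)
    (hinj : ∀ i ≤ x, ∀ j ≤ x, p i = p j → i = j)
    (hadj : ∀ i < x, G.Adj (p i) (p (i + 1)))
    (hleaf : G.degree (p 0) = 1)
    (hdeg2 : ∀ i, 1 ≤ i → i ≤ x - 1 → G.degree (p i) = 2) :
    (transmission G (p (x - 1)) : ℤ) - transmission G (p x) = n - 2 * x := by
  classical
  have hP : G.IsPendantPath p x := ⟨hinj, hadj, hleaf, hdeg2⟩
  have hinjOn : Set.InjOn p (Finset.range x) := fun i hi j hj ↦
    hinj i (by simp at hi; omega) j (by simp at hj; omega)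
  set S := (Finset.range x).image p
  have hon : ∀ u ∈ S, (G.dist (p (x - 1)) u : ℤ) - G.dist (p x) u = -1 := by
    simp only [S, Finset.mem_image, Finset.mem_range, forall_exists_index, and_imp]
    rintro _ j hj rfl
    rw [dist_comm, dist_comm (u := p x), hP.dist_eq_sub hconn (Nat.le_sub_one_of_lt hj) (by omega),
      hP.dist_eq_sub hconn hj.le le_rfl]
    omega
  have hoff : ∀ u ∉ S, (G.dist (p (x - 1)) u : ℤ) - G.dist (p x) u = 1 := fun u hu ↦ by
    have hw : ∀ j ≤ x - 1, u ≠ p j := fun j hj h ↦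
      hu (Finset.mem_image.mpr ⟨j, by simp; omega, h.symm⟩)
    rw [hP.dist_eq_dist_succ_add_one hconn (by omega) hw, Nat.sub_add_cancel hx1]
    push_cast
    ring
  rw [transmission, transmission, Nat.cast_sum, Nat.cast_sum, ← Finset.sum_sub_distrib,
    sum_eq_card_sub_two_mul_card S _ hon hoff, Finset.card_image_of_injOn hinjOn,
    Finset.card_range, hn]

/-- If `P = u v₁ v₂ ⋯ v_{x-1} v` is a pendant path of length `x < n/2` attached at a
vertex `v` of degree at least 3 in a connected graph of order `n`, then
`Tr(v_{x-1}) - Tr(v) = n - 2x`.  Here `p i` is the `i`-th vertex on the path,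
with `p 0 = u` the leaf and `p x = v`. -/
theorem stmt_3 {V : Type*} [Fintype V] (G : SimpleGraph V) [DecidableRel G.Adj]
    (hconn : G.Connected) (n x : ℕ) (hn : Fintype.card V = n) (hx1 : 1 ≤ x)
    (p : ℕ → V)
    (hinj : ∀ i ≤ x, ∀ j ≤ x, p i = p j → i = j)
    (hadj : ∀ i < x, G.Adj (p i) (p (i + 1)))
    (hleaf : G.degree (p 0) = 1)
    (hdeg2 : ∀ i, 1 ≤ i → i ≤ x - 1 → G.degree (p i) = 2)
    (hdegv : 3 ≤ G.degree (p x))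
    (hx : 2 * x < n) :
    (transmission G (p (x - 1)) : ℤ) - transmission G (p x) = n - 2 * x :=
  stmt_3_general G hconn n x hn hx1 p hinj hadj hleaf hdeg2
end

section
/- For every a ≥ 2, in the caterpillar-like tree H²(a-1, a; a, a+1) — obtained from two vertices u and w joined by a path u v w of length 2, where u has two additional pendant paths of lengths a and a+1 attached and w has two additional pendant paths of lengths a-1 and a attached — all vertices have pairwise distinct transmissions; i.e., H²(a-1, a; a, a+1) is a transmission irregular tree of order 4a + 3. -/
/-- Arm lengths of `H²(a-1, a; a, a+1)`: arms `a` and `a+1` at `u`, arms `a-1` and `a` at `w`. -/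
def armLen (a : ℕ) : Fin 4 → ℕ := ![a, a + 1, a - 1, a]

/-- Vertex set: `Fin 3` is the central path `u v w` (as `0 1 2`), and `⟨i, j⟩` is the
`(j+1)`-st vertex on the `i`-th pendant arm. -/
abbrev HVert (a : ℕ) : Type := Fin 3 ⊕ (Σ i : Fin 4, Fin (armLen a i))

/-- Which central vertex each arm is attached to: arms 0, 1 at `u = 0`, arms 2, 3 at `w = 2`. -/
def armRoot : Fin 4 → Fin 3 := ![0, 0, 2, 2]

/-- The tree `H²(a-1, a; a, a+1)`: a central path `u v w`, pendant paths of lengths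
`a` and `a+1` attached at `u`, and pendant paths of lengths `a-1` and `a` attached at `w`. -/
def Htree (a : ℕ) : SimpleGraph (HVert a) :=
  SimpleGraph.fromRel (fun x y =>
    match x, y with
    | Sum.inl c, Sum.inl c' => ((c : ℕ) = 0 ∧ (c' : ℕ) = 1) ∨ ((c : ℕ) = 1 ∧ (c' : ℕ) = 2)
    | Sum.inl c, Sum.inr q => c = armRoot q.1 ∧ (q.2 : ℕ) = 0
    | Sum.inr q, Sum.inr q' => q.1 = q'.1 ∧ (q'.2 : ℕ) = (q.2 : ℕ) + 1
    | _, _ => False)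

/-!
Rooting the tree at `u`, every vertex has a depth and a parent, and the distance between two
vertices can be read off the picture (`HVert.treeDist`). It is the graph distance: it changes by
at most one along an edge, and it drops by exactly one when the deeper endpoint moves to its
parent. Acyclicity comes from the parent structure: on a cycle, the two neighbours of a deepest
vertex would both be its parent.

Summing distances, `t` steps out along a pendant path of length `L` the transmission exceeds that
of the attachment vertex by `t² + (n - 2L - 1) t`, where `n = 4a + 3`. Completing the square, every
transmission is `(a + s)² + a² + c` with `s ≥ 0` and `2a + 2 ≤ c ≤ 6a + 3`. If two vertices with
`s ≤ s'` have equal transmissions, then `(a + s')² - (a + s)² ≤ 4a + 1`, so either `s' = s` and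
`c' = c`, or `s' = s + 1` and `c - c' = 2(a + s) + 1`; a check of the seven classes of vertices
shows that the first forces equal vertices and the second never happens.
-/

namespace SimpleGraph

variable {V : Type*} {G : SimpleGraph V}

theorem isAcyclic_of_forall_adj_parent (ht : V → ℕ) (par : V → V)
    (h : ∀ x y, G.Adj x y → (y = par x ∧ ht y < ht x) ∨ (x = par y ∧ ht x < ht y)) :
    G.IsAcyclic := by
  classical
  intro v c hc
  obtain ⟨u, hu, hmax⟩ := c.support.toFinset.exists_max_image ht ⟨v, by simp⟩
  rw [List.mem_toFinset] at hu
  set c' := c.rotate u hu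
  have hc' : c'.IsCycle := hc.rotate hu
  have below : ∀ y ∈ c'.support, G.Adj u y → y = par u := fun y hy hadj => by
    rcases h u y hadj with ⟨hy', -⟩ | ⟨-, hlt⟩
    · exact hy'
    · exact absurd (hmax y (by simpa [c', Walk.mem_support_rotate_iff] using hy)) hlt.not_ge
  exact hc'.snd_ne_penultimate <|
    (below _ (c'.getVert_mem_support _) (c'.adj_snd hc'.not_nil)).trans
      (below _ (c'.getVert_mem_support _) (c'.adj_penultimate hc'.not_nil).symm).symm

theorem Walk.le_length_of_forall_adj (d : V → V → ℕ) (hself : ∀ x, d x x = 0)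
    (hadj : ∀ x y z, G.Adj x y → d x z ≤ d y z + 1) {u v : V} (p : G.Walk u v) :
    d u v ≤ p.length := by
  induction p with
  | nil => simp [hself]
  | cons h p ih => simpa using (hadj _ _ _ h).trans (Nat.add_le_add_right ih 1)

theorem exists_walk_length_le_of_descent (d : V → V → ℕ)
    (hstep : ∀ x y, x ≠ y →
      (∃ x', G.Adj x x' ∧ d x' y < d x y) ∨ (∃ y', G.Adj y' y ∧ d x y' < d x y))
    (x y : V) : ∃ p : G.Walk x y, p.length ≤ d x y := by
  induction hn : d x y using Nat.strong_induction_on generalizing x y with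
  | _ n ih =>
    by_cases hxy : x = y
    · subst hxy
      exact ⟨.nil, by simp⟩
    rcases hstep x y hxy with ⟨x', hadj, hlt⟩ | ⟨y', hadj, hlt⟩
    · obtain ⟨p, hp⟩ := ih _ (hn ▸ hlt) x' y rfl
      exact ⟨.cons hadj p, by simp; omega⟩
    · obtain ⟨p, hp⟩ := ih _ (hn ▸ hlt) x y' rfl
      exact ⟨p.concat hadj, by simp; omega⟩

end SimpleGraph

lemma Fin.two_mul_sum_val_add (n : ℕ) : 2 * ∑ j : Fin n, (j : ℕ) + n = n * n := by
  rw [Fin.sum_univ_eq_sum_range (fun j => j), mul_comm, Finset.sum_range_id_mul_two]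
  cases n with
  | zero => rfl
  | succ n => simp only [add_tsub_cancel_right]; ring

lemma Fin.two_mul_sum_dist_add {t n : ℕ} (ht : t < n) :
    2 * ∑ j : Fin n, Nat.dist t j + 2 * n * t + n = 2 * t * t + 2 * t + n * n := by
  rw [Fin.sum_univ_eq_sum_range (Nat.dist t)]
  induction n, ht using Nat.le_induction with
  | base =>
    have hreflect : ∑ j ∈ Finset.range (t + 1), Nat.dist t j = ∑ j ∈ Finset.range (t + 1), j := by
      rw [← Finset.sum_range_reflect]
      refine Finset.sum_congr rfl fun j hj => ?_
      simp only [Finset.mem_range] at hj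
      simp only [Nat.dist]
      omega
    have := Finset.sum_range_id_mul_two (t + 1)
    simp only [add_tsub_cancel_right] at this
    rw [hreflect]
    linarith
  | succ n _ ih =>
    obtain ⟨k, rfl⟩ : ∃ k, n = t + k := ⟨n - t, by omega⟩
    rw [Finset.sum_range_succ, show Nat.dist t (t + k) = k by simp [Nat.dist]]
    linarith

lemma Nat.eq_or_eq_succ_of_sq_add_eq_sq_add {m m' c c' : ℕ} (hm : m ≤ m')
    (h : m ^ 2 + c = m' ^ 2 + c') (hc : c ≤ c' + 4 * m + 3) :
    (m' = m ∧ c = c') ∨ (m' = m + 1 ∧ c = c' + 2 * m + 1) := by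
  obtain ⟨d, rfl⟩ := Nat.exists_eq_add_of_le hm
  have hd : c = c' + d * (2 * m + d) := by linarith
  rcases d with _ | _ | d
  · simp_all
  · right; constructor <;> linarith
  · nlinarith

namespace HVert

variable {a : ℕ}

lemma inr_eq_inr_iff {i k : Fin 4} {j : Fin (armLen a i)} {j' : Fin (armLen a k)} :
    (Sum.inr ⟨i, j⟩ : HVert a) = .inr ⟨k, j'⟩ ↔ i = k ∧ (j : ℕ) = j' := by
  constructor
  · intro h
    cases h
    simp
  · rintro ⟨rfl, h⟩
    rw [Fin.ext h]

lemma card_eq (ha : 1 ≤ a) : Fintype.card (HVert a) = 4 * a + 3 := by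
  rw [Fintype.card_sum, Fintype.card_sigma]
  simp only [Fintype.card_fin, Fin.sum_univ_four]
  simp [armLen]
  omega

lemma sum_univ {M : Type*} [AddCommMonoid M] (f : HVert a → M) :
    ∑ x, f x = ∑ c : Fin 3, f (.inl c) + ∑ i : Fin 4, ∑ j : Fin (armLen a i), f (.inr ⟨i, j⟩) := by
  rw [Fintype.sum_sum_type, Fintype.sum_sigma]

/- The tree is rooted at `u = inl 0`; `parent` sends the root to itself. -/
def depth : HVert a → ℕ
  | .inl c => c
  | .inr ⟨i, j⟩ => armRoot i + j + 1

def parent : HVert a → HVert a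
  | .inl c => .inl ⟨c - 1, by omega⟩
  | .inr ⟨i, ⟨0, _⟩⟩ => .inl (armRoot i)
  | .inr ⟨i, ⟨j + 1, h⟩⟩ => .inr ⟨i, ⟨j, by omega⟩⟩

lemma depth_parent (x : HVert a) : x.parent.depth = x.depth - 1 := by
  rcases x with c | ⟨i, ⟨_ | j, hj⟩⟩ <;> simp [parent, depth]
  omega

def treeDist : HVert a → HVert a → ℕ
  | .inl c, .inl c' => Nat.dist c c'
  | .inl c, .inr ⟨k, j⟩ => Nat.dist c (armRoot k) + j + 1
  | .inr ⟨i, j⟩, .inl c => j + 1 + Nat.dist (armRoot i) c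
  | .inr ⟨i, j⟩, .inr ⟨k, j'⟩ =>
      if i = k then Nat.dist j j' else j + 1 + Nat.dist (armRoot i) (armRoot k) + j' + 1

lemma treeDist_self (x : HVert a) : treeDist x x = 0 := by
  rcases x with c | ⟨i, j⟩ <;> simp [treeDist]

lemma treeDist_comm (x y : HVert a) : treeDist x y = treeDist y x := by
  rcases x with c | ⟨i, j⟩ <;> rcases y with c' | ⟨k, j'⟩ <;>
    simp only [treeDist] <;> (try split_ifs) <;> simp_all [Nat.dist] <;> omega

lemma treeDist_le_treeDist_parent_add_one (x z : HVert a) :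
    treeDist x z ≤ treeDist x.parent z + 1 := by
  rcases x with c | ⟨i, ⟨_ | j, hj⟩⟩ <;> rcases z with c' | ⟨k, j'⟩ <;>
    simp only [treeDist, parent] <;> (try split_ifs) <;> simp_all [Nat.dist] <;> omega

lemma treeDist_parent_le_treeDist_add_one (x z : HVert a) :
    treeDist x.parent z ≤ treeDist x z + 1 := by
  rcases x with c | ⟨i, ⟨_ | j, hj⟩⟩ <;> rcases z with c' | ⟨k, j'⟩ <;>
    simp only [treeDist, parent] <;> (try split_ifs) <;> simp_all [Nat.dist] <;> omega

lemma treeDist_parent_add_one {x y : HVert a} (hxy : x ≠ y) (hle : y.depth ≤ x.depth) :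
    0 < x.depth ∧ treeDist x.parent y + 1 = treeDist x y := by
  rcases x with c | ⟨i, ⟨_ | j, hj⟩⟩ <;> rcases y with c' | ⟨k, ⟨j', hj'⟩⟩ <;>
    simp only [treeDist, parent, depth, ne_eq, Sum.inl.injEq, inr_eq_inr_iff,
      Fin.ext_iff (n := 3)] at hxy hle ⊢ <;>
    (try split_ifs at hxy ⊢) <;> simp_all [Nat.dist] <;> omega

/- Chosen so that the transmission of `x` is `(a + transIndex x) ^ 2 + a ^ 2 + transOffset a x`. -/
def transIndex : HVert a → ℕ
  | .inl c => ![0, 0, 1] c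
  | .inr ⟨i, j⟩ => j + ![2, 1, 3, 2] i

def transOffset (a : ℕ) : HVert a → ℕ
  | .inl c => ![6 * a + 2, 6 * a + 3, 4 * a + 5] c
  | .inr ⟨i, _⟩ => ![4 * a + 1, 6 * a + 2, 2 * a + 2, 4 * a + 5] i

lemma transOffset_mem_Icc (ha : 1 ≤ a) (x : HVert a) :
    transOffset a x ∈ Set.Icc (2 * a + 2) (6 * a + 3) := by
  rcases x with c | ⟨i, j⟩
  · fin_cases c <;> simp [transOffset] <;> omega
  · fin_cases i <;> simp [transOffset] <;> omega

lemma eq_of_transIndex_eq_of_transOffset_eq (ha : 1 ≤ a) {x y : HVert a}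
    (hi : x.transIndex = y.transIndex) (ho : transOffset a x = transOffset a y) : x = y := by
  rcases x with c | ⟨i, ⟨j, hj⟩⟩ <;> rcases y with c' | ⟨k, ⟨j', hj'⟩⟩
  all_goals try fin_cases c
  all_goals try fin_cases c'
  all_goals try fin_cases i
  all_goals try fin_cases k
  all_goals simp [transIndex, transOffset] at * <;> omega

lemma transOffset_ne_of_transIndex_eq_succ (ha : 1 ≤ a) {x y : HVert a}
    (hi : y.transIndex = x.transIndex + 1) :
    transOffset a x ≠ transOffset a y + 2 * (a + x.transIndex) + 1 := by
  rcases x with c | ⟨i, ⟨j, hj⟩⟩ <;> rcases y with c' | ⟨k, ⟨j', hj'⟩⟩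
  all_goals try fin_cases c
  all_goals try fin_cases c'
  all_goals try fin_cases i
  all_goals try fin_cases k
  all_goals simp [transIndex, transOffset] at * <;> omega

end HVert

namespace Htree

open HVert

variable {a : ℕ}

lemma adj_iff {x y : HVert a} :
    (Htree a).Adj x y ↔ (0 < x.depth ∧ y = x.parent) ∨ (0 < y.depth ∧ x = y.parent) := by
  rw [Htree, SimpleGraph.fromRel_adj]
  rcases x with c | ⟨i, ⟨_ | j, hj⟩⟩ <;> rcases y with c' | ⟨k, ⟨_ | j', hj'⟩⟩ <;>
    simp only [depth, parent, ne_eq, Sum.inl.injEq, inr_eq_inr_iff, Fin.ext_iff (n := 3)] <;>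
    simp <;> omega

lemma adj_parent {x : HVert a} (hx : 0 < x.depth) : (Htree a).Adj x x.parent :=
  adj_iff.mpr (.inl ⟨hx, rfl⟩)

lemma exists_walk_length_le (x y : HVert a) :
    ∃ p : (Htree a).Walk x y, p.length ≤ treeDist x y := by
  refine SimpleGraph.exists_walk_length_le_of_descent treeDist (fun x y hxy => ?_) x y
  rcases le_total y.depth x.depth with hle | hle
  · obtain ⟨hx, hd⟩ := treeDist_parent_add_one hxy hle
    exact .inl ⟨x.parent, adj_parent hx, by omega⟩
  · obtain ⟨hy, hd⟩ := treeDist_parent_add_one hxy.symm hle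
    refine .inr ⟨y.parent, (adj_parent hy).symm, ?_⟩
    rw [treeDist_comm x, treeDist_comm x]
    omega

theorem dist_eq_treeDist (x y : HVert a) : (Htree a).dist x y = treeDist x y := by
  obtain ⟨p, hp⟩ := exists_walk_length_le x y
  obtain ⟨q, hq⟩ := p.reachable.exists_walk_length_eq_dist
  refine le_antisymm ((SimpleGraph.dist_le p).trans hp)
    (hq ▸ q.le_length_of_forall_adj treeDist treeDist_self fun x y z hxy => ?_)
  rcases adj_iff.mp hxy with ⟨-, rfl⟩ | ⟨-, rfl⟩
  · exact treeDist_le_treeDist_parent_add_one x z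
  · exact treeDist_parent_le_treeDist_add_one y z

theorem isTree : (Htree a).IsTree where
  connected := ⟨fun x y => (exists_walk_length_le x y).elim fun p _ => p.reachable⟩
  isAcyclic := SimpleGraph.isAcyclic_of_forall_adj_parent depth parent fun x y h => by
    rcases adj_iff.mp h with ⟨hx, rfl⟩ | ⟨hy, rfl⟩
    · exact .inl ⟨rfl, by rw [depth_parent]; omega⟩
    · exact .inr ⟨rfl, by rw [depth_parent]; omega⟩

theorem transmission_eq (ha : 1 ≤ a) (x : HVert a) :
    transmission (Htree a) x = (a + x.transIndex) ^ 2 + a ^ 2 + transOffset a x := by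
  simp only [transmission, dist_eq_treeDist, sum_univ, Fin.sum_univ_three, Fin.sum_univ_four]
  obtain ⟨b, rfl⟩ : ∃ b, a = b + 1 := ⟨a - 1, by omega⟩
  have gauss := fun i => Fin.two_mul_sum_val_add (armLen (b + 1) i)
  have g0 := gauss 0; have g1 := gauss 1; have g2 := gauss 2; have g3 := gauss 3
  rcases x with c | ⟨i, t⟩
  · fin_cases c <;> simp [treeDist, Finset.sum_add_distrib] <;>
      simp [armLen, armRoot, Nat.dist, transIndex, transOffset] at g0 g1 g2 g3 ⊢ <;> linarith
  · have hd := Fin.two_mul_sum_dist_add t.isLt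
    fin_cases i <;> simp [treeDist, Finset.sum_add_distrib] <;>
      simp [armLen, armRoot, Nat.dist, transIndex, transOffset] at g0 g1 g2 g3 hd ⊢ <;> linarith

theorem transmission_injective (ha : 1 ≤ a) : Function.Injective (transmission (Htree a)) := by
  intro x y h
  wlog hxy : x.transIndex ≤ y.transIndex generalizing x y
  · exact (this h.symm (le_of_not_ge hxy)).symm
  rw [transmission_eq ha, transmission_eq ha] at h
  obtain ⟨hx, hx'⟩ := transOffset_mem_Icc ha x
  obtain ⟨hy, hy'⟩ := transOffset_mem_Icc ha y
  have hsq : (a + x.transIndex) ^ 2 + transOffset a x =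
      (a + y.transIndex) ^ 2 + transOffset a y := by omega
  rcases Nat.eq_or_eq_succ_of_sq_add_eq_sq_add (by omega) hsq (by omega) with
    ⟨hi, ho⟩ | ⟨hi, ho⟩
  · exact eq_of_transIndex_eq_of_transOffset_eq ha (by omega) ho
  · exact absurd ho (transOffset_ne_of_transIndex_eq_succ ha (by omega))

end Htree

/-- For every `a ≥ 2`, the tree `H²(a-1, a; a, a+1)` is a transmission irregular
tree of order `4a + 3`. -/
theorem stmt_7 (a : ℕ) (ha : 2 ≤ a) :
    Fintype.card (HVert a) = 4 * a + 3 ∧ (Htree a).IsTree ∧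
      Function.Injective (transmission (Htree a)) :=
  ⟨HVert.card_eq (by omega), Htree.isTree, Htree.transmission_injective (by omega)⟩
end

section
/- Fix an integer b ≥ 3. Define B_1 = {2kb + k² - 2k : k ∈ [b+1]}, B_2 = {2kb + k² : k ∈ [b]}, B_3 = {2kb + (k+1)² + 7 : k ∈ [b-1]}, and B_4 = {2kb + (k+2)² + 4 : k ∈ [b-2]}. Then B_1, B_2, B_3, B_4 are pairwise disjoint. -/
/-!
Adding `b²` turns the four sets into sets of shifted squares: `b² + Bᵢ` consists of the numbers
`m² + cᵢ` with `(c₁, c₂, c₃, c₄) = (2b - 1, 0, 7 - 2b, 4 - 4b)` and `m` in a subinterval of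
`[b, 2b]`. If `m² + c = n² + c'` then `(n - m)(n + m) = c - c'`, and in all six cases
`|c - c'| < 3 (n + m)`, so `|n - m| ≤ 2`. For each such value of `n - m` the equation is linear
in `m`, and it fails by parity or because `m` or `n` leaves its interval.
-/

open Set

theorem abs_sub_lt_of_abs_sq_sub_sq_lt_mul_add {m n r : ℤ} (hr : 0 ≤ r)
    (h : |n ^ 2 - m ^ 2| < r * (n + m)) : |n - m| < r := by
  have hpos : 0 < n + m := by
    by_contra! hle
    have : r * (n + m) ≤ 0 := mul_nonpos_of_nonneg_of_nonpos hr hle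
    exact (abs_nonneg _).not_gt (h.trans_le this)
  rw [sq_sub_sq, abs_mul, abs_of_pos hpos, mul_comm r] at h
  exact lt_of_mul_lt_mul_left h hpos.le

theorem disjoint_image_sq_add_Icc {c c' lo hi lo' hi' : ℤ} (r : ℕ)
    (hc : |c - c'| < r * (lo' + lo))
    (hnear : ∀ t : ℤ, -r < t → t < r → ∀ m, lo ≤ m → m ≤ hi → lo' ≤ m + t → m + t ≤ hi' →
      c - c' ≠ t * (2 * m + t)) :
    Disjoint ((fun m ↦ m ^ 2 + c) '' Icc lo hi) ((fun n ↦ n ^ 2 + c') '' Icc lo' hi') := by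
  rw [Set.disjoint_left]
  rintro _ ⟨m, ⟨hm, hm'⟩, rfl⟩ ⟨n, ⟨hn, hn'⟩, hmn⟩
  have hdiff : n ^ 2 - m ^ 2 = c - c' := by linarith
  have hclose : |n - m| < r := by
    refine abs_sub_lt_of_abs_sq_sub_sq_lt_mul_add (Int.natCast_nonneg r) ?_
    rw [hdiff]
    nlinarith [Int.natCast_nonneg r]
  rw [abs_lt] at hclose
  refine hnear (n - m) hclose.1 hclose.2 m hm hm' (by linarith) (by linarith) ?_
  rw [← hdiff]
  ring

theorem setOf_subset_preimage_image_Icc {f g : ℤ → ℤ} {lo hi s t : ℤ}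
    (hfg : ∀ k, f k + t = g (k + s)) :
    {x | ∃ k, lo ≤ k ∧ k ≤ hi ∧ x = f k} ⊆ (· + t) ⁻¹' (g '' Icc (lo + s) (hi + s)) := by
  rintro _ ⟨k, hk, hk', rfl⟩
  exact ⟨k + s, ⟨by linarith, by linarith⟩, (hfg k).symm⟩

/-- For `b ≥ 3`, the four sets `B₁ = {2kb + k² - 2k : k ∈ [b+1]}`,
`B₂ = {2kb + k² : k ∈ [b]}`, `B₃ = {2kb + (k+1)² + 7 : k ∈ [b-1]}`,
`B₄ = {2kb + (k+2)² + 4 : k ∈ [b-2]}` are pairwise disjoint. -/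
theorem stmt_10 (b : ℕ) (hb : 3 ≤ b)
    (B1 B2 B3 B4 : Set ℤ)
    (hB1 : B1 = {x | ∃ k : ℤ, 1 ≤ k ∧ k ≤ (b : ℤ) + 1 ∧ x = 2 * k * b + k ^ 2 - 2 * k})
    (hB2 : B2 = {x | ∃ k : ℤ, 1 ≤ k ∧ k ≤ (b : ℤ) ∧ x = 2 * k * b + k ^ 2})
    (hB3 : B3 = {x | ∃ k : ℤ, 1 ≤ k ∧ k ≤ (b : ℤ) - 1 ∧ x = 2 * k * b + (k + 1) ^ 2 + 7})
    (hB4 : B4 = {x | ∃ k : ℤ, 1 ≤ k ∧ k ≤ (b : ℤ) - 2 ∧ x = 2 * k * b + (k + 2) ^ 2 + 4}) :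
    Disjoint B1 B2 ∧ Disjoint B1 B3 ∧ Disjoint B1 B4 ∧
      Disjoint B2 B3 ∧ Disjoint B2 B4 ∧ Disjoint B3 B4 := by
  have h1 : B1 ⊆ (· + (b : ℤ) ^ 2) ⁻¹'
      ((fun m ↦ m ^ 2 + (2 * b - 1)) '' Icc (1 + (b - 1)) (b + 1 + (b - 1))) :=
    hB1 ▸ setOf_subset_preimage_image_Icc fun k ↦ by ring
  have h2 : B2 ⊆ (· + (b : ℤ) ^ 2) ⁻¹' ((fun m ↦ m ^ 2 + 0) '' Icc (1 + b) (b + b)) :=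
    hB2 ▸ setOf_subset_preimage_image_Icc fun k ↦ by ring
  have h3 : B3 ⊆ (· + (b : ℤ) ^ 2) ⁻¹'
      ((fun m ↦ m ^ 2 + (7 - 2 * b)) '' Icc (1 + (b + 1)) (b - 1 + (b + 1))) :=
    hB3 ▸ setOf_subset_preimage_image_Icc fun k ↦ by ring
  have h4 : B4 ⊆ (· + (b : ℤ) ^ 2) ⁻¹'
      ((fun m ↦ m ^ 2 + (4 - 4 * b)) '' Icc (1 + (b + 2)) (b - 2 + (b + 2))) :=
    hB4 ▸ setOf_subset_preimage_image_Icc fun k ↦ by ring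
  refine ⟨((disjoint_image_sq_add_Icc 3 ?_ ?_).preimage _).mono h1 h2,
    ((disjoint_image_sq_add_Icc 3 ?_ ?_).preimage _).mono h1 h3,
    ((disjoint_image_sq_add_Icc 3 ?_ ?_).preimage _).mono h1 h4,
    ((disjoint_image_sq_add_Icc 3 ?_ ?_).preimage _).mono h2 h3,
    ((disjoint_image_sq_add_Icc 3 ?_ ?_).preimage _).mono h2 h4,
    ((disjoint_image_sq_add_Icc 3 ?_ ?_).preimage _).mono h3 h4⟩
  all_goals first
    | rw [abs_lt]; omega
    | intro t ht ht'; push_cast at ht ht'; interval_cases t <;> omega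
end

section
/- Fix an integer a ≥ 3 odd. Define A_1 = {(2j+1)a + (j-2)(j+1) : j ∈ [a+2]_0}, A_2 = {(2j+1)a + (j+6)(j+1) : j ∈ [a-2]_0}, B_1 = {2ja + j(j+1) : j ∈ [a+1]_0}, B_2 = {2ja + j(j+5) + 2 : j ∈ [a-1]_0}. Then: (1) every element of A_1 ∪ A_2 is odd and every element of B_1 ∪ B_2 is even; (2) B_1 ∩ B_2 = ∅; (3) A_1 ∩ A_2 = ∅ if and only if a ≢ 1 (mod 3). -/
/-!
Each element is an odd multiple of `a` (for A) or an even number (for B) plus a product of two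
integers of different parity, which settles the parities. A coincidence between the two families
of A (resp. B) at indices `j`, `k` factors as `(j - k) * s = r` with `s > 0` and `0 < r < n * s`,
where `n = 4` (resp. `2`), so `0 < j - k < n`. For A, `j - k = 2` contradicts parity and
`j - k = 3` the range of `k`, while `j = k + 1` happens exactly when `a = 3k + 4`; for B,
`j = k + 1` forces `k = a`, outside the range.
-/

lemma Int.even_mul_of_odd_sub {x y : ℤ} (h : Odd (y - x)) : Even (x * y) := by
  rw [Int.even_mul]
  rcases Int.even_or_odd x with hx | hx
  · exact Or.inl hx
  · exact Or.inr (by simpa using h.add_odd hx)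

lemma Int.pos_and_lt_of_mul_eq {d s r : ℤ} (n : ℤ) (hs : 0 < s) (hr : 0 < r) (hrn : r < n * s)
    (h : d * s = r) : 0 < d ∧ d < n :=
  ⟨pos_of_mul_pos_left (h ▸ hr) hs.le, lt_of_mul_lt_mul_right (h ▸ hrn) hs.le⟩

lemma eq_add_one_and_eq_of_A_values_eq {a j k : ℤ} (ha : 1 < a) (hj : 0 ≤ j) (hk : 0 ≤ k)
    (hka : k ≤ a - 2)
    (h : (2 * j + 1) * a + (j - 2) * (j + 1) = (2 * k + 1) * a + (k + 6) * (k + 1)) :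
    j = k + 1 ∧ a = 3 * k + 4 := by
  obtain ⟨d, rfl⟩ : ∃ d, j = k + d := ⟨j - k, by ring⟩
  have key : d * (d + 2 * k + 2 * a - 1) = 8 * (k + 1) := by linear_combination h
  obtain ⟨hd0, hd4⟩ := Int.pos_and_lt_of_mul_eq 4 (by omega) (by omega) (by nlinarith) key
  interval_cases d <;> omega

lemma B_values_ne {a j k : ℤ} (hj : 0 ≤ j) (hk : 0 ≤ k) (hka : k ≤ a - 1) :
    2 * j * a + j * (j + 1) ≠ 2 * k * a + k * (k + 5) + 2 := by
  intro h
  obtain ⟨d, rfl⟩ : ∃ d, j = k + d := ⟨j - k, by ring⟩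
  have key : d * (d + 2 * k + 2 * a + 1) = 4 * k + 2 := by linear_combination h
  obtain ⟨hd0, hd2⟩ := Int.pos_and_lt_of_mul_eq 2 (by omega) (by omega) (by nlinarith) key
  interval_cases d
  omega

/-- For odd `a ≥ 3`, with `A₁ = {(2j+1)a + (j-2)(j+1) : j ∈ [a+2]₀}`,
`A₂ = {(2j+1)a + (j+6)(j+1) : j ∈ [a-2]₀}`, `B₁ = {2ja + j(j+1) : j ∈ [a+1]₀}`,
`B₂ = {2ja + j(j+5) + 2 : j ∈ [a-1]₀}`:
(1) all elements of `A₁ ∪ A₂` are odd and all elements of `B₁ ∪ B₂` are even;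
(2) `B₁ ∩ B₂ = ∅`; (3) `A₁ ∩ A₂ = ∅` iff `a ≢ 1 (mod 3)`. -/
theorem stmt_13 (a : ℕ) (ha : 3 ≤ a) (haodd : Odd a)
    (A1 A2 B1 B2 : Set ℤ)
    (hA1 : A1 = {x | ∃ j : ℤ, 0 ≤ j ∧ j ≤ (a : ℤ) + 2 ∧
      x = (2 * j + 1) * a + (j - 2) * (j + 1)})
    (hA2 : A2 = {x | ∃ j : ℤ, 0 ≤ j ∧ j ≤ (a : ℤ) - 2 ∧
      x = (2 * j + 1) * a + (j + 6) * (j + 1)})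
    (hB1 : B1 = {x | ∃ j : ℤ, 0 ≤ j ∧ j ≤ (a : ℤ) + 1 ∧ x = 2 * j * a + j * (j + 1)})
    (hB2 : B2 = {x | ∃ j : ℤ, 0 ≤ j ∧ j ≤ (a : ℤ) - 1 ∧ x = 2 * j * a + j * (j + 5) + 2}) :
    (∀ x ∈ A1 ∪ A2, Odd x) ∧ (∀ x ∈ B1 ∪ B2, Even x) ∧
      Disjoint B1 B2 ∧ (Disjoint A1 A2 ↔ a % 3 ≠ 1) := by
  subst hA1 hA2 hB1 hB2
  have haZ : Odd (a : ℤ) := (Int.odd_coe_nat a).mpr haodd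
  refine ⟨?_, ?_, ?_, ⟨?_, ?_⟩⟩
  · rintro x (⟨j, -, -, rfl⟩ | ⟨j, -, -, rfl⟩)
    · exact ((odd_two_mul_add_one j).mul haZ).add_even (Int.even_mul_of_odd_sub ⟨1, by ring⟩)
    · exact ((odd_two_mul_add_one j).mul haZ).add_even (Int.even_mul_of_odd_sub ⟨-3, by ring⟩)
  · rintro x (⟨j, -, -, rfl⟩ | ⟨j, -, -, rfl⟩)
    · exact (even_two_mul _ |>.mul_right _).add (Int.even_mul_of_odd_sub ⟨0, by ring⟩)
    · exact ((even_two_mul _ |>.mul_right _).add (Int.even_mul_of_odd_sub ⟨2, by ring⟩)).add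
        even_two
  · rw [Set.disjoint_left]
    rintro x ⟨j, hj, -, rfl⟩ ⟨k, hk, hka, hx⟩
    exact B_values_ne hj hk hka hx
  · intro hdis h1
    obtain ⟨t, ht⟩ : ∃ t : ℕ, a = 3 * t + 4 := ⟨(a - 4) / 3, by omega⟩
    refine Set.disjoint_left.mp hdis ⟨t + 1, by omega, by omega, rfl⟩ ⟨t, by omega, by omega, ?_⟩
    rw [ht]
    push_cast
    ring
  · rintro hmod
    rw [Set.disjoint_left]
    rintro x ⟨j, hj, -, rfl⟩ ⟨k, hk, hka, hx⟩
    obtain ⟨-, hak⟩ := eq_add_one_and_eq_of_A_values_eq (by omega) hj hk hka hx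
    omega
end

section
/- Fix an integer a ≥ 3. Define A_1 = {2ja + j(j-1) : j ∈ [a+2]_0}, A_2 = {2ja + j(j+1) + 1 : j ∈ [a+1]_0}, A_3 = {2ja + (j+1)(j+4) - 1 : j ∈ [a-1]_0}, A_4 = {2ja + j(j+7) + 4 : j ∈ [a-2]_0}. Then: (1) A_1 and A_4 consist of even numbers and A_2, A_3 consist of odd numbers; (2) A_2 ∩ A_3 = ∅; (3) A_1 ∩ A_4 = ∅ if and only if a ≢ 2 (mod 3). -/
/-!
Each `Aᵢ` is the set of values of a quadratic `transᵢ a` at `j = 0, 1, …`; the parities are read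
off by writing each quadratic as an even number plus a product of consecutive integers.
`trans₁ a` and `trans₂ a` are strictly increasing on `j ≥ 0`, and for `0 ≤ k < a`
* `trans₂ a k < trans₃ a k < trans₂ a (k + 1)`, so `trans₃ a k` is never a value of `trans₂ a`;
* `trans₁ a k < trans₄ a k < trans₁ a (k + 2)`, so `trans₄ a k` can only equal `trans₁ a (k + 1)`,
  and `trans₁ a (k + 1) - trans₄ a k = 2a - 6k - 4` vanishes iff `a = 3k + 2`.
-/

open Set

section StrictMonoOn

variable {β : Type*} [LinearOrder β] {f : ℤ → β} {n m : ℤ}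

theorem StrictMonoOn.not_lt_of_lt_add_one (hf : StrictMonoOn f (Ici 0)) (hn : 0 ≤ n)
    (hm : 0 ≤ m) (h₁ : f n < f m) : ¬f m < f (n + 1) := fun h₂ ↦ by
  have := (hf.lt_iff_lt hn hm).1 h₁
  have := (hf.lt_iff_lt hm (by simp only [mem_Ici]; omega)).1 h₂
  omega

theorem StrictMonoOn.eq_add_one_of_lt_of_lt_add_two (hf : StrictMonoOn f (Ici 0)) (hn : 0 ≤ n)
    (hm : 0 ≤ m) (h₁ : f n < f m) (h₂ : f m < f (n + 2)) : m = n + 1 := by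
  have := (hf.lt_iff_lt hn hm).1 h₁
  have := (hf.lt_iff_lt hm (by simp only [mem_Ici]; omega)).1 h₂
  omega

end StrictMonoOn

section Trans

-- `transᵢ a j` is the element of `Aᵢ` indexed by `j`.
def trans₁ (a : ℕ) (j : ℤ) : ℤ := 2 * j * a + j * (j - 1)

def trans₂ (a : ℕ) (j : ℤ) : ℤ := 2 * j * a + j * (j + 1) + 1

def trans₃ (a : ℕ) (j : ℤ) : ℤ := 2 * j * a + (j + 1) * (j + 4) - 1

def trans₄ (a : ℕ) (j : ℤ) : ℤ := 2 * j * a + j * (j + 7) + 4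

variable (a : ℕ) {k : ℤ}

theorem even_trans₁ (j : ℤ) : Even (trans₁ a j) := by
  have h : trans₁ a j = 2 * (j * a) + j * (j - 1) := by unfold trans₁; ring
  exact h ▸ (even_two_mul _).add (Int.even_mul_pred_self j)

theorem even_trans₄ (j : ℤ) : Even (trans₄ a j) := by
  have h : trans₄ a j = 2 * (j * a + 3 * j + 2) + j * (j + 1) := by unfold trans₄; ring
  exact h ▸ (even_two_mul _).add (Int.even_mul_succ_self j)

theorem odd_trans₂ (j : ℤ) : Odd (trans₂ a j) := by
  have h : trans₂ a j = 2 * (j * a) + j * (j + 1) + 1 := by unfold trans₂; ring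
  exact h ▸ ((even_two_mul _).add (Int.even_mul_succ_self j)).add_one

theorem odd_trans₃ (j : ℤ) : Odd (trans₃ a j) := by
  have h : trans₃ a j = 2 * (j * a + j) + (j + 1) * (j + 1 + 1) + 1 := by unfold trans₃; ring
  exact h ▸ ((even_two_mul _).add (Int.even_mul_succ_self (j + 1))).add_one

theorem strictMonoOn_trans₁ (ha : 0 < a) : StrictMonoOn (trans₁ a) (Ici 0) := by
  intro x hx y _ hxy
  simp only [mem_Ici] at hx
  have ha' : (0 : ℤ) < a := by exact_mod_cast ha
  unfold trans₁
  nlinarith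

theorem strictMonoOn_trans₂ : StrictMonoOn (trans₂ a) (Ici 0) := by
  intro x hx y _ hxy
  simp only [mem_Ici] at hx
  have ha : (0 : ℤ) ≤ a := by positivity
  unfold trans₂
  nlinarith

theorem trans₂_lt_trans₃ (hk : 0 ≤ k) : trans₂ a k < trans₃ a k := by
  unfold trans₂ trans₃; linarith

theorem trans₃_lt_trans₂_add_one (hka : k < a) : trans₃ a k < trans₂ a (k + 1) := by
  unfold trans₂ trans₃; linarith

theorem trans₁_lt_trans₄ (hk : 0 ≤ k) : trans₁ a k < trans₄ a k := by
  unfold trans₁ trans₄; linarith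

theorem trans₄_lt_trans₁_add_two (hka : k < a) : trans₄ a k < trans₁ a (k + 2) := by
  unfold trans₁ trans₄; linarith

theorem trans₁_add_one_eq_trans₄_iff : trans₁ a (k + 1) = trans₄ a k ↔ (a : ℤ) = 3 * k + 2 := by
  unfold trans₁ trans₄; constructor <;> intro h <;> linarith

theorem trans₂_ne_trans₃ {j : ℤ} (hj : 0 ≤ j) (hk : 0 ≤ k) (hka : k < a) :
    trans₂ a j ≠ trans₃ a k :=
  fun h ↦ (strictMonoOn_trans₂ a).not_lt_of_lt_add_one hk hj (h ▸ trans₂_lt_trans₃ a hk)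
    (h ▸ trans₃_lt_trans₂_add_one a hka)

theorem trans₁_eq_trans₄_iff {j : ℤ} (hj : 0 ≤ j) (hk : 0 ≤ k) (hka : k < a) :
    trans₁ a j = trans₄ a k ↔ j = k + 1 ∧ (a : ℤ) = 3 * k + 2 := by
  constructor
  · intro h
    have hjk : j = k + 1 := (strictMonoOn_trans₁ a (by omega)).eq_add_one_of_lt_of_lt_add_two hk
      hj (h ▸ trans₁_lt_trans₄ a hk) (h ▸ trans₄_lt_trans₁_add_two a hka)
    exact ⟨hjk, (trans₁_add_one_eq_trans₄_iff a).1 (hjk ▸ h)⟩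
  · rintro ⟨rfl, ha⟩
    exact (trans₁_add_one_eq_trans₄_iff a).2 ha

end Trans

theorem stmt_14_general (a : ℕ)
    (A1 A2 A3 A4 : Set ℤ)
    (hA1 : A1 = {x | ∃ j : ℤ, 0 ≤ j ∧ j ≤ (a : ℤ) + 2 ∧ x = 2 * j * a + j * (j - 1)})
    (hA2 : A2 = {x | ∃ j : ℤ, 0 ≤ j ∧ j ≤ (a : ℤ) + 1 ∧ x = 2 * j * a + j * (j + 1) + 1})
    (hA3 : A3 = {x | ∃ j : ℤ, 0 ≤ j ∧ j ≤ (a : ℤ) - 1 ∧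
      x = 2 * j * a + (j + 1) * (j + 4) - 1})
    (hA4 : A4 = {x | ∃ j : ℤ, 0 ≤ j ∧ j ≤ (a : ℤ) - 2 ∧ x = 2 * j * a + j * (j + 7) + 4}) :
    (∀ x ∈ A1 ∪ A4, Even x) ∧ (∀ x ∈ A2 ∪ A3, Odd x) ∧
      Disjoint A2 A3 ∧ (Disjoint A1 A4 ↔ a % 3 ≠ 2) := by
  subst hA1 hA2 hA3 hA4
  refine ⟨?_, ?_, ?_, ?_⟩
  · rintro x (⟨j, -, -, rfl⟩ | ⟨j, -, -, rfl⟩)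
    exacts [even_trans₁ a j, even_trans₄ a j]
  · rintro x (⟨j, -, -, rfl⟩ | ⟨j, -, -, rfl⟩)
    exacts [odd_trans₂ a j, odd_trans₃ a j]
  · rw [disjoint_left]
    rintro x ⟨j, hj, -, rfl⟩ ⟨k, hk, hka, hx⟩
    exact trans₂_ne_trans₃ a hj hk (by omega) hx
  · rw [disjoint_left]
    constructor
    · intro hd ha
      have hcommon : trans₁ a (a / 3 + 1) = trans₄ a (a / 3) :=
        (trans₁_eq_trans₄_iff a (by omega) (by omega) (by omega)).2 ⟨rfl, by omega⟩
      exact hd ⟨a / 3 + 1, by omega, by omega, rfl⟩ ⟨a / 3, by omega, by omega, hcommon⟩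
    · rintro ha x ⟨j, hj, -, rfl⟩ ⟨k, hk, hka, hx⟩
      have := (trans₁_eq_trans₄_iff a hj hk (by omega)).1 hx
      omega

/-- For `a ≥ 3`, with `A₁ = {2ja + j(j-1) : j ∈ [a+2]₀}`,
`A₂ = {2ja + j(j+1) + 1 : j ∈ [a+1]₀}`, `A₃ = {2ja + (j+1)(j+4) - 1 : j ∈ [a-1]₀}`,
`A₄ = {2ja + j(j+7) + 4 : j ∈ [a-2]₀}`:
(1) `A₁` and `A₄` consist of even numbers, `A₂` and `A₃` of odd numbers;
(2) `A₂ ∩ A₃ = ∅`; (3) `A₁ ∩ A₄ = ∅` iff `a ≢ 2 (mod 3)`. -/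
theorem stmt_14 (a : ℕ) (ha : 3 ≤ a)
    (A1 A2 A3 A4 : Set ℤ)
    (hA1 : A1 = {x | ∃ j : ℤ, 0 ≤ j ∧ j ≤ (a : ℤ) + 2 ∧ x = 2 * j * a + j * (j - 1)})
    (hA2 : A2 = {x | ∃ j : ℤ, 0 ≤ j ∧ j ≤ (a : ℤ) + 1 ∧ x = 2 * j * a + j * (j + 1) + 1})
    (hA3 : A3 = {x | ∃ j : ℤ, 0 ≤ j ∧ j ≤ (a : ℤ) - 1 ∧
      x = 2 * j * a + (j + 1) * (j + 4) - 1})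
    (hA4 : A4 = {x | ∃ j : ℤ, 0 ≤ j ∧ j ≤ (a : ℤ) - 2 ∧ x = 2 * j * a + j * (j + 7) + 4}) :
    (∀ x ∈ A1 ∪ A4, Even x) ∧ (∀ x ∈ A2 ∪ A3, Odd x) ∧
      Disjoint A2 A3 ∧ (Disjoint A1 A4 ↔ a % 3 ≠ 2) :=
  stmt_14_general a A1 A2 A3 A4 hA1 hA2 hA3 hA4
end

section
/- Let a ≥ 3. The equation 2ka + k(k-1) = 2ja + j(j+7) + 4 with k ∈ [a+2]_0, j ∈ [a-2]_0 has a solution if and only if a ≡ 2 (mod 3); moreover, any solution satisfies k = j + 1 and a = 3j + 2. -/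
/-!
The left side `f k = 2ka + k(k-1)` is monotone in `k`. For `k ≤ j` it is at most
`2ja + j(j-1)`, below the right side; for `k ≥ j + 2` it is at least
`2(j+2)a + (j+2)(j+1)`, which exceeds the right side by `4a - 4j - 2 > 0` once `j < a`.
Hence `k = j + 1`, and then the equation reduces to `2a = 6j + 4`.
-/

theorem monotone_two_mul_mul_add_mul_pred (a : ℕ) :
    Monotone fun k : ℕ => 2 * k * a + k * (k - 1) := fun _ _ h =>
  Nat.add_le_add (by gcongr) (Nat.mul_le_mul h (Nat.sub_le_sub_right h 1))

theorem two_mul_succ_mul_add_eq_iff (a j : ℕ) :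
    2 * (j + 1) * a + (j + 1) * (j + 1 - 1) = 2 * j * a + j * (j + 7) + 4 ↔
      a = 3 * j + 2 := by
  rw [Nat.add_sub_cancel]
  constructor
  · intro h
    nlinarith
  · rintro rfl
    ring

theorem eq_succ_of_two_mul_mul_add_eq {a k j : ℕ} (hj : j < a)
    (h : 2 * k * a + k * (k - 1) = 2 * j * a + j * (j + 7) + 4) : k = j + 1 := by
  have hmono := monotone_two_mul_mul_add_mul_pred a
  rcases lt_trichotomy k (j + 1) with hk | hk | hk
  · have hle : 2 * k * a + k * (k - 1) ≤ 2 * j * a + j * (j - 1) := hmono (by omega)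
    have : j * (j - 1) ≤ j * (j + 7) := Nat.mul_le_mul_left _ (by omega)
    omega
  · exact hk
  · have hge : 2 * (j + 2) * a + (j + 2) * (j + 1) ≤ 2 * k * a + k * (k - 1) :=
      hmono (by omega)
    nlinarith

theorem two_mul_mul_add_eq_iff {a k j : ℕ} (hj : j < a) :
    2 * k * a + k * (k - 1) = 2 * j * a + j * (j + 7) + 4 ↔ k = j + 1 ∧ a = 3 * j + 2 := by
  constructor
  · intro h
    obtain rfl := eq_succ_of_two_mul_mul_add_eq hj h
    exact ⟨rfl, (two_mul_succ_mul_add_eq_iff a j).1 h⟩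
  · rintro ⟨rfl, ha⟩
    exact (two_mul_succ_mul_add_eq_iff a j).2 ha

/-- For `a ≥ 3`, the equation `2ka + k(k-1) = 2ja + j(j+7) + 4` with `k ∈ [a+2]₀`,
`j ∈ [a-2]₀` has a solution iff `a ≡ 2 (mod 3)`; moreover every solution satisfies
`k = j + 1` and `a = 3j + 2`. -/
theorem stmt_16 (a : ℕ) (ha : 3 ≤ a) :
    ((∃ k j : ℕ, k ≤ a + 2 ∧ j ≤ a - 2 ∧
        2 * k * a + k * (k - 1) = 2 * j * a + j * (j + 7) + 4) ↔ a % 3 = 2) ∧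
    (∀ k j : ℕ, k ≤ a + 2 → j ≤ a - 2 →
      2 * k * a + k * (k - 1) = 2 * j * a + j * (j + 7) + 4 →
      k = j + 1 ∧ a = 3 * j + 2) := by
  have solution_iff {k j : ℕ} (hj : j ≤ a - 2) :=
    two_mul_mul_add_eq_iff (k := k) (by omega : j < a)
  refine ⟨⟨?_, fun hmod => ?_⟩, fun k j _ hj => (solution_iff hj).1⟩
  · rintro ⟨k, j, -, hj, h⟩
    obtain ⟨-, rfl⟩ := (solution_iff hj).1 h
    omega
  · exact ⟨(a - 2) / 3 + 1, (a - 2) / 3, by omega, by omega,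
      (solution_iff (by omega)).2 ⟨rfl, by omega⟩⟩
end

section
/- Let G be a transmission irregular graph of order n whose three largest transmissions are attained at v_1, v_2, v_3 with Tr_G(v_1) > Tr_G(v_2) > Tr_G(v_3), and suppose v_1, v_2, v_3 lie on a pendant path v_4 v_3 v_2 v_1 (v_4 the root of degree ≥ 3, v_1 a pendant vertex, v_2 and v_3 of degree 2). Then the graph G + v_2v_4, obtained by adding the edge v_2 v_4, is also transmission irregular. -/
open Finset SimpleGraph

lemma Set.eq_pair_of_ncard_eq_two {α : Type*} {s : Set α} {a b : α} (hs : s.ncard = 2)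
    (ha : a ∈ s) (hb : b ∈ s) (hab : a ≠ b) : s = {a, b} :=
  (Set.eq_of_subset_of_ncard_le (Set.pair_subset ha hb) (by rw [hs, Set.ncard_pair hab])
    (Set.finite_of_ncard_ne_zero (by omega))).symm

namespace SimpleGraph

variable {V : Type*} {G : SimpleGraph V} {u v w x y : V}

lemma Adj.dist_le_dist_add_one (h : G.Adj v w) (u : V) : G.dist v u ≤ G.dist w u + 1 := by
  have := h.reachable.dist_triangle_left u
  rwa [dist_eq_one_iff_adj.mpr h, add_comm] at this

lemma Walk.le_add_length_of_adj_le {f : V → ℤ} (hf : ∀ a b, G.Adj a b → f a ≤ f b + 1) :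
    ∀ {x y : V} (p : G.Walk x y), f x ≤ f y + p.length
  | _, _, .nil => by simp
  | _, _, .cons h p => by
    have := hf _ _ h
    have := le_add_length_of_adj_le hf p
    simp only [Walk.length_cons]
    push_cast
    omega

lemma Connected.le_add_dist_of_adj_le (hG : G.Connected) {f : V → ℤ}
    (hf : ∀ a b, G.Adj a b → f a ≤ f b + 1) (x y : V) : f x ≤ f y + G.dist x y := by
  obtain ⟨p, hp⟩ := hG.exists_walk_length_eq_dist x y
  simpa [hp] using Walk.le_add_length_of_adj_le hf p

lemma Connected.exists_adj_dist_eq_dist_add_one (hG : G.Connected) (hxu : x ≠ u) :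
    ∃ w, G.Adj x w ∧ G.dist x u = G.dist w u + 1 := by
  obtain ⟨p, hp⟩ := hG.exists_walk_length_eq_dist x u
  cases p with
  | nil => exact absurd rfl hxu
  | @cons _ w _ h q =>
    refine ⟨w, h, le_antisymm (h.dist_le_dist_add_one u) ?_⟩
    have : G.dist w u ≤ q.length := dist_le q
    simp only [Walk.length_cons] at hp
    omega

lemma Connected.dist_eq_dist_add_one_of_forall_adj (hG : G.Connected) (hxu : x ≠ u)
    (h : ∀ w, G.Adj x w → w ≠ y → G.dist x u ≤ G.dist w u) :
    G.dist x u = G.dist y u + 1 := by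
  obtain ⟨w, hxw, hw⟩ := hG.exists_adj_dist_eq_dist_add_one hxu
  obtain rfl | hwy := eq_or_ne w y
  · exact hw
  · have := h w hxw hwy
    omega

lemma Connected.dist_eq_dist_add_one_of_neighborSet_eq_singleton (hG : G.Connected)
    (hx : G.neighborSet x = {y}) (hxu : x ≠ u) : G.dist x u = G.dist y u + 1 :=
  hG.dist_eq_dist_add_one_of_forall_adj hxu fun w hw hwy ↦
    absurd (show w ∈ G.neighborSet x from hw) (by simp [hx, hwy])

lemma Connected.dist_eq_dist_add_one_of_neighborSet_eq_pair {z : V} (hG : G.Connected)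
    (hx : G.neighborSet x = {z, y}) (hz : G.dist z u = G.dist x u + 1) (hxu : x ≠ u) :
    G.dist x u = G.dist y u + 1 :=
  hG.dist_eq_dist_add_one_of_forall_adj hxu fun w hw hwy ↦ by
    have : w ∈ G.neighborSet x := hw
    rw [hx, Set.mem_insert_iff, Set.mem_singleton_iff] at this
    rcases this with rfl | rfl
    · omega
    · exact absurd rfl hwy

lemma neighborSet_sup_edge_of_ne {s t : V} (hs : v ≠ s) (ht : v ≠ t) :
    (G ⊔ edge s t).neighborSet v = G.neighborSet v := by
  ext w
  simp [edge_adj, hs, ht]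

structure IsPendantPath_s17 (G : SimpleGraph V) (v4 v3 v2 v1 : V) : Prop where
  neighborSet_v1 : G.neighborSet v1 = {v2}
  neighborSet_v2 : G.neighborSet v2 = {v1, v3}
  neighborSet_v3 : G.neighborSet v3 = {v2, v4}
  three_le_ncard_neighborSet_v4 : 3 ≤ (G.neighborSet v4).ncard

lemma IsPendantPath_s17.of_ncard_neighborSet {v1 v2 v3 v4 : V} (h43 : G.Adj v4 v3) (h32 : G.Adj v3 v2)
    (h21 : G.Adj v2 v1) (hd1 : (G.neighborSet v1).ncard = 1) (hd2 : (G.neighborSet v2).ncard = 2)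
    (hd3 : (G.neighborSet v3).ncard = 2) (hd4 : 3 ≤ (G.neighborSet v4).ncard) :
    G.IsPendantPath_s17 v4 v3 v2 v1 := by
  have h24 : v2 ≠ v4 := by
    rintro rfl
    omega
  obtain ⟨y, hy⟩ := Set.ncard_eq_one.mp hd1
  have h1 : G.neighborSet v1 = {v2} := by
    rwa [Set.eq_singleton_iff_unique_mem.mp hy |>.2 v2 h21.symm]
  have h13 : v1 ≠ v3 := by
    rintro rfl
    have : v4 ∈ G.neighborSet v1 := h43.symm
    simp [h1, h24.symm] at this
  exact ⟨h1, Set.eq_pair_of_ncard_eq_two hd2 h21 h32.symm h13,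
    Set.eq_pair_of_ncard_eq_two hd3 h32 h43.symm h24, hd4⟩

namespace IsPendantPath_s17

variable {v1 v2 v3 v4 : V}

lemma adj_v2_v1 (hP : G.IsPendantPath_s17 v4 v3 v2 v1) : G.Adj v2 v1 :=
  show v1 ∈ G.neighborSet v2 by simp [hP.neighborSet_v2]

lemma adj_v3_v2 (hP : G.IsPendantPath_s17 v4 v3 v2 v1) : G.Adj v3 v2 :=
  show v2 ∈ G.neighborSet v3 by simp [hP.neighborSet_v3]

lemma adj_v3_v4 (hP : G.IsPendantPath_s17 v4 v3 v2 v1) : G.Adj v3 v4 :=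
  show v4 ∈ G.neighborSet v3 by simp [hP.neighborSet_v3]

lemma v2_ne_v4 (hP : G.IsPendantPath_s17 v4 v3 v2 v1) : v2 ≠ v4 := by
  rintro rfl
  have h := hP.three_le_ncard_neighborSet_v4
  rw [hP.neighborSet_v2] at h
  have := Set.ncard_insert_le v1 {v3}
  rw [Set.ncard_singleton] at this
  omega

lemma v1_ne_v3 (hP : G.IsPendantPath_s17 v4 v3 v2 v1) : v1 ≠ v3 := by
  rintro rfl
  have : v4 ∈ G.neighborSet v1 := hP.adj_v3_v4
  simp [hP.neighborSet_v1, hP.v2_ne_v4.symm] at this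

lemma v1_ne_v4 (hP : G.IsPendantPath_s17 v4 v3 v2 v1) : v1 ≠ v4 := by
  rintro rfl
  have : v3 ∈ G.neighborSet v1 := hP.adj_v3_v4.symm
  simp [hP.neighborSet_v1, hP.adj_v3_v2.ne] at this

lemma dist_v1 (hP : G.IsPendantPath_s17 v4 v3 v2 v1) (hG : G.Connected) (hu1 : u ≠ v1) :
    G.dist v1 u = G.dist v2 u + 1 :=
  hG.dist_eq_dist_add_one_of_neighborSet_eq_singleton hP.neighborSet_v1 hu1.symm

lemma dist_v2 (hP : G.IsPendantPath_s17 v4 v3 v2 v1) (hG : G.Connected) (hu1 : u ≠ v1)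
    (hu2 : u ≠ v2) : G.dist v2 u = G.dist v3 u + 1 :=
  hG.dist_eq_dist_add_one_of_neighborSet_eq_pair hP.neighborSet_v2 (hP.dist_v1 hG hu1) hu2.symm

lemma dist_v3 (hP : G.IsPendantPath_s17 v4 v3 v2 v1) (hG : G.Connected) (hu1 : u ≠ v1)
    (hu2 : u ≠ v2) (hu3 : u ≠ v3) : G.dist v3 u = G.dist v4 u + 1 :=
  hG.dist_eq_dist_add_one_of_neighborSet_eq_pair hP.neighborSet_v3 (hP.dist_v2 hG hu1 hu2)
    hu3.symm

lemma neighborSet_sup_edge_v1 (hP : G.IsPendantPath_s17 v4 v3 v2 v1) :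
    (G ⊔ edge v2 v4).neighborSet v1 = {v2} := by
  rw [neighborSet_sup_edge_of_ne hP.adj_v2_v1.ne.symm hP.v1_ne_v4, hP.neighborSet_v1]

lemma le_dist_sup_edge [DecidableEq V] (hP : G.IsPendantPath_s17 v4 v3 v2 v1) (hG : G.Connected)
    (hu1 : u ≠ v1) (hu2 : u ≠ v2) (hu3 : u ≠ v3) (x : V) :
    (G.dist x u : ℤ) - (if x = v1 ∨ x = v2 then 1 else 0) ≤ (G ⊔ edge v2 v4).dist x u := by
  set f : V → ℤ := fun x ↦ G.dist x u - if x = v1 ∨ x = v2 then 1 else 0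
  have hf : ∀ a b, (G ⊔ edge v2 v4).Adj a b → f a ≤ f b + 1 := by
    intro a b hab
    rcases hab with hab | hab
    · have hd := hab.dist_le_dist_add_one u
      by_cases hb : b = v1 ∨ b = v2
      · by_cases ha : a = v1 ∨ a = v2
        · simp only [f, if_pos ha, if_pos hb]
          omega
        · have : a = v3 ∧ b = v2 := by
            have : a ∈ G.neighborSet b := hab.symm
            rcases hb with rfl | rfl
            · simp_all [hP.neighborSet_v1]
            · simp_all [hP.neighborSet_v2]
          obtain ⟨rfl, rfl⟩ := this
          simp only [f, if_neg ha, hP.dist_v2 hG hu1 hu2]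
          omega
      · simp only [f, if_neg hb]
        split_ifs <;> omega
    · have h2 := hP.dist_v2 hG hu1 hu2
      have h3 := hP.dist_v3 hG hu1 hu2 hu3
      rw [edge_adj] at hab
      rcases hab with ⟨⟨rfl, rfl⟩ | ⟨rfl, rfl⟩, -⟩ <;>
        simp only [f, hP.v1_ne_v4.symm, hP.v2_ne_v4.symm, hP.adj_v2_v1.ne, or_true,
          or_false, if_true, if_false] <;> omega
  have hfu : f u = 0 := by simp [f, hu1, hu2]
  have := (hG.mono le_sup_left).le_add_dist_of_adj_le hf x u
  rwa [hfu, zero_add] at this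

lemma dist_sup_edge_of_ne (hP : G.IsPendantPath_s17 v4 v3 v2 v1) (hG : G.Connected) (hu1 : u ≠ v1)
    (hu2 : u ≠ v2) (hu3 : u ≠ v3) (hx1 : x ≠ v1) (hx2 : x ≠ v2) :
    (G ⊔ edge v2 v4).dist x u = G.dist x u := by
  classical
  have hle := (hG.preconnected x u).dist_anti (le_sup_left : G ≤ G ⊔ edge v2 v4)
  have hge := hP.le_dist_sup_edge hG hu1 hu2 hu3 x
  rw [if_neg (by tauto)] at hge
  omega

lemma dist_sup_edge_v2_add_one (hP : G.IsPendantPath_s17 v4 v3 v2 v1) (hG : G.Connected)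
    (hu1 : u ≠ v1) (hu2 : u ≠ v2) (hu3 : u ≠ v3) :
    (G ⊔ edge v2 v4).dist v2 u + 1 = G.dist v2 u := by
  classical
  have hge := hP.le_dist_sup_edge hG hu1 hu2 hu3 v2
  rw [if_pos (Or.inr rfl)] at hge
  have hadj : (G ⊔ edge v2 v4).Adj v2 v4 :=
    .inr <| (edge_adj ..).mpr ⟨.inl ⟨rfl, rfl⟩, hP.v2_ne_v4⟩
  have h24 := hadj.dist_le_dist_add_one u
  have h4 := (hG.preconnected v4 u).dist_anti (le_sup_left : G ≤ G ⊔ edge v2 v4)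
  have h2 := hP.dist_v2 hG hu1 hu2
  have h3 := hP.dist_v3 hG hu1 hu2 hu3
  omega

lemma dist_sup_edge_v1 (hP : G.IsPendantPath_s17 v4 v3 v2 v1) (hG : G.Connected) (hu1 : u ≠ v1) :
    (G ⊔ edge v2 v4).dist v1 u = (G ⊔ edge v2 v4).dist v2 u + 1 :=
  (hG.mono le_sup_left).dist_eq_dist_add_one_of_neighborSet_eq_singleton
    hP.neighborSet_sup_edge_v1 hu1.symm

lemma dist_v3_v1 (hP : G.IsPendantPath_s17 v4 v3 v2 v1) (hG : G.Connected) : G.dist v3 v1 = 2 := by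
  rw [dist_comm, hP.dist_v1 hG hP.v1_ne_v3.symm, dist_eq_one_iff_adj.mpr hP.adj_v3_v2.symm]

lemma dist_sup_edge_v3_v1 (hP : G.IsPendantPath_s17 v4 v3 v2 v1) (hG : G.Connected) :
    (G ⊔ edge v2 v4).dist v3 v1 = 2 := by
  rw [dist_comm, hP.dist_sup_edge_v1 hG hP.v1_ne_v3.symm,
    dist_eq_one_iff_adj.mpr ((le_sup_left : G ≤ G ⊔ edge v2 v4) hP.adj_v3_v2.symm)]

variable [Fintype V]

lemma transmission_eq_sum_compl_add [DecidableEq V] (hP : G.IsPendantPath_s17 v4 v3 v2 v1)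
    (K : SimpleGraph V) (x : V) :
    transmission K x = ∑ u ∈ ({v1, v2, v3} : Finset V)ᶜ, K.dist x u +
      (K.dist x v1 + K.dist x v2 + K.dist x v3) := by
  rw [transmission, ← sum_compl_add_sum {v1, v2, v3},
    sum_insert (by simp [hP.adj_v2_v1.ne.symm, hP.v1_ne_v3]), sum_pair hP.adj_v3_v2.ne.symm,
    add_assoc (K.dist x v1)]

lemma transmission_sup_edge_v2_add_one (hP : G.IsPendantPath_s17 v4 v3 v2 v1) (hG : G.Connected) :
    transmission (G ⊔ edge v2 v4) v2 + 1 = transmission G v3 := by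
  classical
  have hA : ∑ u ∈ ({v1, v2, v3} : Finset V)ᶜ, (G ⊔ edge v2 v4).dist v2 u =
      ∑ u ∈ ({v1, v2, v3} : Finset V)ᶜ, G.dist v3 u := by
    refine sum_congr rfl fun u hu ↦ ?_
    simp only [mem_compl, mem_insert, mem_singleton, not_or] at hu
    have := hP.dist_sup_edge_v2_add_one hG hu.1 hu.2.1 hu.2.2
    have := hP.dist_v2 hG hu.1 hu.2.1
    omega
  have h31 := hP.dist_v3_v1 hG
  have h32 : G.dist v3 v2 = 1 := dist_eq_one_iff_adj.mpr hP.adj_v3_v2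
  have h'21 : (G ⊔ edge v2 v4).dist v2 v1 = 1 := dist_eq_one_iff_adj.mpr (.inl hP.adj_v2_v1)
  have h'23 : (G ⊔ edge v2 v4).dist v2 v3 = 1 :=
    dist_eq_one_iff_adj.mpr (.inl hP.adj_v3_v2.symm)
  rw [hP.transmission_eq_sum_compl_add, hP.transmission_eq_sum_compl_add, hA, dist_self,
    dist_self]
  omega

lemma transmission_sup_edge_v3 (hP : G.IsPendantPath_s17 v4 v3 v2 v1) (hG : G.Connected) :
    transmission (G ⊔ edge v2 v4) v3 = transmission G v3 := by
  classical
  have hA : ∑ u ∈ ({v1, v2, v3} : Finset V)ᶜ, (G ⊔ edge v2 v4).dist v3 u =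
      ∑ u ∈ ({v1, v2, v3} : Finset V)ᶜ, G.dist v3 u := by
    refine sum_congr rfl fun u hu ↦ ?_
    simp only [mem_compl, mem_insert, mem_singleton, not_or] at hu
    exact hP.dist_sup_edge_of_ne hG hu.1 hu.2.1 hu.2.2 hP.v1_ne_v3.symm hP.adj_v3_v2.ne
  have h31 := hP.dist_v3_v1 hG
  have h'31 := hP.dist_sup_edge_v3_v1 hG
  have h32 : G.dist v3 v2 = 1 := dist_eq_one_iff_adj.mpr hP.adj_v3_v2
  have h'32 : (G ⊔ edge v2 v4).dist v3 v2 = 1 := dist_eq_one_iff_adj.mpr (.inl hP.adj_v3_v2)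
  rw [hP.transmission_eq_sum_compl_add, hP.transmission_eq_sum_compl_add, hA, dist_self,
    dist_self]
  omega

lemma transmission_sup_edge_v3_lt_v1 (hP : G.IsPendantPath_s17 v4 v3 v2 v1) (hG : G.Connected) :
    transmission (G ⊔ edge v2 v4) v3 < transmission (G ⊔ edge v2 v4) v1 := by
  classical
  have hA : ∑ u ∈ ({v1, v2, v3} : Finset V)ᶜ, (G ⊔ edge v2 v4).dist v3 u <
      ∑ u ∈ ({v1, v2, v3} : Finset V)ᶜ, (G ⊔ edge v2 v4).dist v1 u := by
    refine sum_lt_sum_of_nonempty ⟨v4, ?_⟩ fun u hu ↦ ?_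
    · simp [hP.v1_ne_v4.symm, hP.v2_ne_v4.symm, hP.adj_v3_v4.ne.symm]
    simp only [mem_compl, mem_insert, mem_singleton, not_or] at hu
    have := hP.dist_sup_edge_of_ne hG hu.1 hu.2.1 hu.2.2 hP.v1_ne_v3.symm hP.adj_v3_v2.ne
    have := hP.dist_sup_edge_v1 hG hu.1
    have := hP.dist_sup_edge_v2_add_one hG hu.1 hu.2.1 hu.2.2
    have := hP.dist_v2 hG hu.1 hu.2.1
    omega
  rw [hP.transmission_eq_sum_compl_add, hP.transmission_eq_sum_compl_add, dist_self, dist_self,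
    dist_comm (u := v1) (v := v3), dist_comm (u := v1) (v := v2)]
  have h'32 : (G ⊔ edge v2 v4).dist v3 v2 = 1 := dist_eq_one_iff_adj.mpr (.inl hP.adj_v3_v2)
  have h'21 : (G ⊔ edge v2 v4).dist v2 v1 = 1 := dist_eq_one_iff_adj.mpr (.inl hP.adj_v2_v1)
  omega

lemma transmission_sup_edge_add_two (hP : G.IsPendantPath_s17 v4 v3 v2 v1) (hG : G.Connected)
    {x : V} (hx1 : x ≠ v1) (hx2 : x ≠ v2) (hx3 : x ≠ v3) :
    transmission (G ⊔ edge v2 v4) x + 2 = transmission G x := by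
  classical
  have hA : ∑ u ∈ ({v1, v2, v3} : Finset V)ᶜ, (G ⊔ edge v2 v4).dist x u =
      ∑ u ∈ ({v1, v2, v3} : Finset V)ᶜ, G.dist x u := by
    refine sum_congr rfl fun u hu ↦ ?_
    simp only [mem_compl, mem_insert, mem_singleton, not_or] at hu
    rw [dist_comm, dist_comm (G := G)]
    exact hP.dist_sup_edge_of_ne hG hx1 hx2 hx3 hu.1 hu.2.1
  have h1 := hP.dist_sup_edge_v1 hG hx1
  have h'1 := hP.dist_v1 hG hx1
  have h2 := hP.dist_sup_edge_v2_add_one hG hx1 hx2 hx3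
  have h3 := hP.dist_sup_edge_of_ne hG hx1 hx2 hx3 hP.v1_ne_v3.symm hP.adj_v3_v2.ne
  rw [hP.transmission_eq_sum_compl_add, hP.transmission_eq_sum_compl_add, hA,
    dist_comm (u := x) (v := v1), dist_comm (u := x) (v := v2), dist_comm (u := x) (v := v3),
    dist_comm (G := G) (u := x) (v := v1), dist_comm (G := G) (u := x) (v := v2),
    dist_comm (G := G) (u := x) (v := v3)]
  omega

end IsPendantPath_s17

end SimpleGraph

lemma Function.injective_of_top_three {α β : Type*} [LinearOrder β] {f : α → β} {a b c : α}
    (hab : f a < f b) (hbc : f b < f c)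
    (hlt : ∀ x, x ≠ a → x ≠ b → x ≠ c → f x < f a)
    (hinj : ∀ x y, x ≠ a → x ≠ b → x ≠ c → y ≠ a → y ≠ b → y ≠ c → f x = f y → x = y) :
    Function.Injective f := by
  intro x y hxy
  by_contra hxy'
  by_cases hx : x ≠ a ∧ x ≠ b ∧ x ≠ c <;> by_cases hy : y ≠ a ∧ y ≠ b ∧ y ≠ c
  · exact hxy' (hinj x y hx.1 hx.2.1 hx.2.2 hy.1 hy.2.1 hy.2.2 hxy)
  all_goals grind

theorem stmt_17_general {V : Type*} [Fintype V] (G : SimpleGraph V) (hconn : G.Connected)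
    (hTI : Function.Injective (transmission G))
    (v1 v2 v3 v4 : V)
    (hmax : ∀ z, z ≠ v1 → z ≠ v2 → z ≠ v3 → transmission G z < transmission G v3)
    (ha43 : G.Adj v4 v3) (ha32 : G.Adj v3 v2) (ha21 : G.Adj v2 v1)
    (hd1 : (G.neighborSet v1).ncard = 1)
    (hd2 : (G.neighborSet v2).ncard = 2)
    (hd3 : (G.neighborSet v3).ncard = 2)
    (hd4 : 3 ≤ (G.neighborSet v4).ncard) :
    Function.Injective (transmission (G ⊔ SimpleGraph.fromEdgeSet {s(v2, v4)})) := by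
  change Function.Injective (transmission (G ⊔ edge v2 v4))
  have hP := IsPendantPath_s17.of_ncard_neighborSet ha43 ha32 ha21 hd1 hd2 hd3 hd4
  have h2 := hP.transmission_sup_edge_v2_add_one hconn
  have h3 := hP.transmission_sup_edge_v3 hconn
  refine Function.injective_of_top_three (a := v2) (b := v3) (c := v1) (by omega)
    (hP.transmission_sup_edge_v3_lt_v1 hconn) (fun x hx2 hx3 hx1 ↦ ?_)
    (fun x y hx2 hx3 hx1 hy2 hy3 hy1 hxy ↦ hTI ?_)
  · have := hP.transmission_sup_edge_add_two hconn hx1 hx2 hx3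
    have := hmax x hx1 hx2 hx3
    omega
  · have := hP.transmission_sup_edge_add_two hconn hx1 hx2 hx3
    have := hP.transmission_sup_edge_add_two hconn hy1 hy2 hy3
    omega

/-- Let `G` be a connected transmission irregular graph whose three largest transmissions
are attained at `v₁ > v₂ > v₃`, lying on a pendant path `v₄ v₃ v₂ v₁` (with `v₁` a leaf,
`v₂, v₃` of degree 2 and root `v₄` of degree at least 3).  Then `G + v₂v₄` is
transmission irregular. -/
theorem stmt_17 {V : Type*} [Fintype V] (G : SimpleGraph V) (hconn : G.Connected)
    (hTI : Function.Injective (transmission G))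
    (v1 v2 v3 v4 : V)
    (h12 : transmission G v2 < transmission G v1)
    (h23 : transmission G v3 < transmission G v2)
    (hmax : ∀ z, z ≠ v1 → z ≠ v2 → z ≠ v3 → transmission G z < transmission G v3)
    (ha43 : G.Adj v4 v3) (ha32 : G.Adj v3 v2) (ha21 : G.Adj v2 v1)
    (hd1 : (G.neighborSet v1).ncard = 1)
    (hd2 : (G.neighborSet v2).ncard = 2)
    (hd3 : (G.neighborSet v3).ncard = 2)
    (hd4 : 3 ≤ (G.neighborSet v4).ncard) :
    Function.Injective (transmission (G ⊔ SimpleGraph.fromEdgeSet {s(v2, v4)})) :=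
  stmt_17_general G hconn hTI v1 v2 v3 v4 hmax ha43 ha32 ha21 hd1 hd2 hd3 hd4
end
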